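/- arXiv:math/9807029 — 5 statements merged into one kernel-verified Lean document; each statement's English description precedes it below -/
import Mathlib

section
/- Let q be a prime power, let d ≥ 2, let Tr denote the trace map from F_{q^d} to F_q, let G = F_{q^d}^*/F_q^* be the quotient group, and let L₀ ⊆ G be the image under the quotient map of the set {x ∈ F_{q^d}^* : Tr(x) = 0}. Then L₀ is a ((q^d−1)/(q−1), (q^{d−1}−1)/(q−1), (q^{d−2}−1)/(q−1)) difference set in G. -/
/-! For an `F`-subspace `W` of `E`, the units lying in `W` form a union of `Fˣ`-cosets with
`q ^ dim W - 1` elements, so their image in `Eˣ ⧸ Fˣ` has `(q ^ dim W - 1) / (q - 1)` elements.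
For `g = [u] ≠ 1`, the representations `g = d₁ d₂⁻¹` correspond to the classes `[y]` with
`Tr y = Tr (u y) = 0`. As `u ∉ F` and the trace form is nondegenerate, the functionals `Tr` and
`Tr (u ·)` are linearly independent, so these `y` form a subspace of dimension `d - 2`.
-/

/-- `D` is a `(v,K,λ)` difference set in the group `G`: `G` has order `v`, `D` has `K`
elements, and every nonidentity `g ∈ G` can be written as `d₁ * d₂⁻¹` with `d₁, d₂ ∈ D`
in exactly `lam` ways. -/
def IsDiffSet {G : Type*} [Group G] (v K lam : ℕ) (D : Set G) : Prop :=
  Nat.card G = v ∧ Nat.card D = K ∧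
  ∀ g : G, g ≠ 1 →
    Nat.card {p : G × G // p.1 ∈ D ∧ p.2 ∈ D ∧ p.1 * p.2⁻¹ = g} = lam

theorem card_units_mem_eq_card_sub_one {G₀ : Type*} [GroupWithZero G₀] {s : Set G₀}
    (h0 : (0 : G₀) ∈ s) : Nat.card {x : G₀ˣ | (x : G₀) ∈ s} = Nat.card s - 1 := by
  have e : {x : G₀ˣ | (x : G₀) ∈ s} ≃ ↥(s \ {0}) :=
    { toFun := fun x => ⟨x.1, x.2, x.1.ne_zero⟩
      invFun := fun y => ⟨Units.mk0 y.1 y.2.2, y.2.1⟩ }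
  rw [Nat.card_congr e, Nat.card_coe_set_eq, Nat.card_coe_set_eq,
    Set.ncard_sdiff_singleton_of_mem h0]

theorem card_mul_inv_reps_eq_card_inter {G : Type*} [Group G] (D : Set G) (g : G) :
    Nat.card {p : G × G // p.1 ∈ D ∧ p.2 ∈ D ∧ p.1 * p.2⁻¹ = g} =
      Nat.card ↥(D ∩ (g * ·) ⁻¹' D) :=
  Nat.card_congr
    { toFun := fun p => ⟨p.1.2, p.2.2.1, by simpa [← p.2.2.2] using p.2.1⟩
      invFun := fun b => ⟨(g * b.1, b.1), b.2.2, b.2.1, mul_inv_cancel_right _ _⟩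
      left_inv := fun p => by ext <;> simp [← p.2.2.2]
      right_inv := fun b => rfl }

theorem LinearMap.finrank_ker_of_surjective {K V W : Type*} [Field K] [AddCommGroup V]
    [Module K V] [AddCommGroup W] [Module K W] [FiniteDimensional K V] {f : V →ₗ[K] W}
    (hf : Function.Surjective f) :
    Module.finrank K (LinearMap.ker f) = Module.finrank K V - Module.finrank K W := by
  have h := f.finrank_range_add_finrank_ker
  rw [LinearMap.range_eq_top.mpr hf, finrank_top] at h
  omega

theorem LinearMap.prod_surjective_of_not_ker_le {K V : Type*} [Field K] [AddCommGroup V]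
    [Module K V] {f g : V →ₗ[K] K} (hf : Function.Surjective f)
    (hker : ¬ LinearMap.ker f ≤ LinearMap.ker g) : Function.Surjective (f.prod g) := by
  obtain ⟨t, ht⟩ := hf 1
  obtain ⟨w, hfw, hgw⟩ := Set.not_subset.mp hker
  rw [SetLike.mem_coe, LinearMap.mem_ker] at hfw hgw
  rintro ⟨a, b⟩
  refine ⟨a • t + ((b - a * g t) / g w) • w, ?_⟩
  ext
  · simp [ht, hfw]
  · simp [div_mul_cancel₀ _ hgw]

theorem Algebra.not_ker_trace_le_ker_trace_mul {F E : Type*} [Field F] [Field E] [Algebra F E]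
    [FiniteDimensional F E] [Algebra.IsSeparable F E] {u : E}
    (hu : u ∉ Set.range (algebraMap F E)) :
    ¬ LinearMap.ker (Algebra.trace F E) ≤
      LinearMap.ker (Algebra.trace F E ∘ₗ LinearMap.mulLeft F u) := by
  intro hle
  have hspan := mem_span_of_iInf_ker_le_ker (L := fun _ : Unit => Algebra.trace F E)
    (by simpa using hle)
  rw [Set.range_const, Submodule.mem_span_singleton] at hspan
  obtain ⟨c, hc⟩ := hspan
  -- `Tr (u y) = c • Tr y` for all `y` says that `u - c` is orthogonal to `E` for the trace form
  refine hu ⟨c, (sub_eq_zero.mp ((traceForm_nondegenerate F E).1 _ fun y => ?_)).symm⟩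
  have hcy := LinearMap.congr_fun hc y
  simp only [LinearMap.smul_apply, LinearMap.comp_apply, LinearMap.mulLeft_apply,
    smul_eq_mul] at hcy
  rw [Algebra.traceForm_apply, sub_mul, map_sub, ← hcy, ← Algebra.smul_def, map_smul,
    smul_eq_mul, sub_self]

section BaseUnits

variable {F E : Type*} [Field F] [Field E] [Algebra F E]

variable (F E) in
abbrev baseUnits : Subgroup Eˣ := (Units.map (algebraMap F E).toMonoidHom).range

theorem card_baseUnits [Finite F] : Nat.card (baseUnits F E) = Nat.card F - 1 := by
  rw [← Nat.card_congr (MonoidHom.ofInjective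
    (Units.map_injective (algebraMap F E).injective)).toEquiv, Nat.card_units]

theorem preimage_image_mk_setOf_units_mem (W : Submodule F E) :
    QuotientGroup.mk ⁻¹' ((QuotientGroup.mk (s := baseUnits F E)) '' {x : Eˣ | (x : E) ∈ W}) =
      {x : Eˣ | (x : E) ∈ W} := by
  rw [QuotientGroup.preimage_image_mk_eq_mul]
  refine subset_antisymm ?_ fun x hx => ⟨x, hx, 1, one_mem _, mul_one x⟩
  rintro _ ⟨x, hx, _, ⟨c, rfl⟩, rfl⟩
  simpa [mul_comm, Algebra.smul_def] using W.smul_mem (c : F) hx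

theorem card_of_preimage_mk_eq_setOf_units_mem [Finite E] {T : Set (Eˣ ⧸ baseUnits F E)}
    {W : Submodule F E} (hT : QuotientGroup.mk ⁻¹' T = {x : Eˣ | (x : E) ∈ W}) :
    Nat.card T = (Nat.card F ^ Module.finrank F W - 1) / (Nat.card F - 1) := by
  have : Finite F := Finite.of_injective _ (algebraMap F E).injective
  have h := QuotientGroup.card_preimage_mk (baseUnits F E) T
  have hW : Nat.card {x : Eˣ | (x : E) ∈ W} = Nat.card W - 1 :=
    card_units_mem_eq_card_sub_one (s := (W : Set E)) W.zero_mem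
  rw [hT, hW, card_baseUnits, Module.natCard_eq_pow_finrank (K := F)] at h
  exact (Nat.div_eq_of_eq_mul_right (Nat.sub_pos_of_lt Finite.one_lt_card) h).symm

end BaseUnits

theorem stmt_1_general (q d : ℕ)
    (F E : Type*) [Field F] [Field E] [Algebra F E] [Fintype F] [Fintype E]
    (hF : Fintype.card F = q) (hE : Fintype.card E = q ^ d) :
    IsDiffSet ((q ^ d - 1) / (q - 1)) ((q ^ (d - 1) - 1) / (q - 1))
      ((q ^ (d - 2) - 1) / (q - 1))
      ((QuotientGroup.mk (s := (Units.map (algebraMap F E).toMonoidHom).range)) ''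
        {x : Eˣ | Algebra.trace F E (x : E) = 0}) := by
  rw [← Nat.card_eq_fintype_card] at hF hE
  subst hF
  have hrank : Module.finrank F E = d :=
    Nat.pow_right_injective Finite.one_lt_card (Module.natCard_eq_pow_finrank.symm.trans hE)
  set S : Set Eˣ := {x | (x : E) ∈ LinearMap.ker (Algebra.trace F E)}
  have hS : QuotientGroup.mk ⁻¹' (QuotientGroup.mk (s := baseUnits F E) '' S) = S :=
    preimage_image_mk_setOf_units_mem _
  change IsDiffSet _ _ _ (QuotientGroup.mk '' S)
  refine ⟨?_, ?_, fun g hg => ?_⟩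
  · rw [← Nat.card_univ, card_of_preimage_mk_eq_setOf_units_mem (W := ⊤) rfl, finrank_top,
      hrank]
  · rw [card_of_preimage_mk_eq_setOf_units_mem hS,
      LinearMap.finrank_ker_of_surjective (Algebra.trace_surjective F E), hrank,
      Module.finrank_self]
  obtain ⟨u, rfl⟩ := QuotientGroup.mk_surjective g
  have hu : (u : E) ∉ Set.range (algebraMap F E) := by
    rintro ⟨c, hc⟩
    refine hg ((QuotientGroup.eq_one_iff u).mpr ⟨Units.mk0 c ?_, Units.ext hc⟩)
    rintro rfl
    exact u.ne_zero (by simpa using hc.symm)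
  set φ := (Algebra.trace F E).prod (Algebra.trace F E ∘ₗ LinearMap.mulLeft F (u : E))
  have hφ : Function.Surjective φ := LinearMap.prod_surjective_of_not_ker_le
    (Algebra.trace_surjective F E) (Algebra.not_ker_trace_le_ker_trace_mul hu)
  rw [card_mul_inv_reps_eq_card_inter,
    card_of_preimage_mk_eq_setOf_units_mem (W := LinearMap.ker φ),
    LinearMap.finrank_ker_of_surjective hφ, hrank, Module.finrank_prod, Module.finrank_self]
  ext x
  change x ∈ QuotientGroup.mk ⁻¹' (QuotientGroup.mk '' S) ∧
    u * x ∈ QuotientGroup.mk ⁻¹' (QuotientGroup.mk '' S) ↔ _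
  rw [hS]
  simp [S, φ]

/-- The image `L₀` in `Eˣ ⧸ Fˣ` of the set of nonzero trace-zero elements of `E = F_{q^d}`
is a `((q^d-1)/(q-1), (q^{d-1}-1)/(q-1), (q^{d-2}-1)/(q-1))` difference set. -/
theorem stmt_1 (q d : ℕ) (hq : ∃ p n : ℕ, p.Prime ∧ 0 < n ∧ q = p ^ n) (hd : 2 ≤ d)
    (F E : Type*) [Field F] [Field E] [Algebra F E] [Fintype F] [Fintype E]
    (hF : Fintype.card F = q) (hE : Fintype.card E = q ^ d) :
    IsDiffSet ((q ^ d - 1) / (q - 1)) ((q ^ (d - 1) - 1) / (q - 1))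
      ((q ^ (d - 2) - 1) / (q - 1))
      ((QuotientGroup.mk (s := (Units.map (algebraMap F E).toMonoidHom).range)) ''
        {x : Eˣ | Algebra.trace F E (x : E) = 0}) :=
  stmt_1_general q d F E hF hE
end

section
/- Let d ≥ 2 and let k ≥ 2 be an integer with gcd(k, 2^d−1) = 1 and gcd(k−1, 2^d−1) = 1. Then d divides B_k(d), the number of integers a with 0 < a < 2^d−1 such that s(a) + s((k−1)a) = s(ka) + 1. -/
/-- `sBin d x` is the number of 1's in the binary representation of the reduction of `x`
modulo `2^d - 1`. -/
def sBin (d x : ℕ) : ℕ := (Nat.digits 2 (x % (2 ^ d - 1))).count 1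

/-- `B k d` is the number of `a` with `0 < a < 2^d - 1` such that
`s(a) + s((k-1)a) = s(ka) + 1`. -/
def B (k d : ℕ) : ℕ :=
  ((Finset.Ioo 0 (2 ^ d - 1)).filter
    (fun a => sBin d a + sBin d ((k - 1) * a) = sBin d (k * a) + 1)).card


def pc (n : ℕ) : ℕ := (Nat.digits 2 n).count 1

lemma pc_zero : pc 0 = 0 := by simp [pc]

lemma pc_one : pc 1 = 1 := by norm_num [pc]

lemma pc_two_mul (n : ℕ) : pc (2 * n) = pc n := by
  rcases Nat.eq_zero_or_pos n with rfl | hn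
  · simp
  · have h : Nat.digits 2 (2 * n) = 0 :: Nat.digits 2 n := by
      rw [Nat.digits_def' (by norm_num : 1 < 2) (by positivity)]
      simp
    simp [pc, h]

lemma pc_two_mul_add_one (n : ℕ) : pc (2 * n + 1) = pc n + 1 := by
  have h : Nat.digits 2 (2 * n + 1) = 1 :: Nat.digits 2 n := by
    rw [Nat.digits_def' (by norm_num : 1 < 2) (by positivity)]
    have h1 : (2 * n + 1) % 2 = 1 := by omega
    have h2 : (2 * n + 1) / 2 = n := by omega
    rw [h1, h2]
  unfold pc
  rw [h]
  simp

lemma pc_add_pow_mul : ∀ (t c x : ℕ), c < 2 ^ t → pc (c + 2 ^ t * x) = pc c + pc x := by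
  intro t
  induction t with
  | zero =>
    intro c x hc
    interval_cases c
    simp [pc_zero]
  | succ t ih =>
    intro c x hc
    have h2 : (2:ℕ) ^ (t+1) * x = 2 * (2 ^ t * x) := by ring
    have hc2 : c / 2 < 2 ^ t := by omega
    rcases Nat.mod_two_eq_zero_or_one c with h | h
    · have key : c + 2 ^ (t+1) * x = 2 * (c / 2 + 2 ^ t * x) := by omega
      have hcc : c = 2 * (c / 2) := by omega
      rw [key, pc_two_mul, ih _ _ hc2]
      conv_rhs => rw [hcc, pc_two_mul]
    · have key : c + 2 ^ (t+1) * x = 2 * (c / 2 + 2 ^ t * x) + 1 := by omega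
      have hcc : c = 2 * (c / 2) + 1 := by omega
      rw [key, pc_two_mul_add_one, ih _ _ hc2]
      conv_rhs => rw [hcc, pc_two_mul_add_one]
      omega

lemma sBin_eq_pc (d x : ℕ) : sBin d x = pc (x % (2 ^ d - 1)) := rfl

lemma sBin_congr (d : ℕ) {x y : ℕ} (h : x ≡ y [MOD 2 ^ d - 1]) : sBin d x = sBin d y := by
  rw [sBin_eq_pc, sBin_eq_pc, h]

lemma geom (t : ℕ) : ∀ m : ℕ, (2 ^ t - 1) * (∑ i ∈ Finset.range m, 2 ^ (t * i)) + 1 = 2 ^ (t * m) := by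
  intro m
  induction m with
  | zero => simp
  | succ m ih =>
    rw [Finset.sum_range_succ, Nat.mul_add, Nat.mul_succ, pow_add]
    have hX : 1 ≤ (2:ℕ) ^ t := Nat.one_le_two_pow
    have h1 : (2 ^ t - 1) * 2 ^ (t * m) + 2 ^ (t*m) = 2 ^ t * 2 ^ (t*m) := by
      rw [Nat.sub_mul, one_mul]
      have : 2 ^ (t*m) ≤ 2 ^ t * 2 ^ (t*m) := Nat.le_mul_of_pos_left _ (by positivity)
      omega
    rw [mul_comm ((2:ℕ) ^ (t*m)) (2 ^ t)]
    omega

lemma pc_mul_geom (t : ℕ) : ∀ (m c : ℕ), c < 2 ^ t →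
    pc (c * ∑ i ∈ Finset.range m, 2 ^ (t * i)) = m * pc c := by
  intro m
  induction m with
  | zero => intro c _; simpa using pc_zero
  | succ m ih =>
    intro c hc
    have hR : ∑ i ∈ Finset.range (m+1), 2 ^ (t * i) =
        1 + 2 ^ t * ∑ i ∈ Finset.range m, 2 ^ (t * i) := by
      rw [Finset.sum_range_succ', Finset.mul_sum]
      simp only [Nat.mul_zero, pow_zero]
      rw [add_comm]
      congr 1
      apply Finset.sum_congr rfl
      intro i _
      rw [← pow_add]
      ring_nf
    have key : c * (1 + 2 ^ t * ∑ i ∈ Finset.range m, 2 ^ (t * i)) =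
        c + 2 ^ t * (c * ∑ i ∈ Finset.range m, 2 ^ (t * i)) := by ring
    rw [hR, key, pc_add_pow_mul _ _ _ hc, ih c hc]
    ring

-- rotation lemma
lemma sBin_two_mul (d x : ℕ) (hd : 2 ≤ d) : sBin d (2 * x) = sBin d x := by
  set N := 2 ^ d - 1 with hNdef
  have hd2P : (2:ℕ) ^ d = 2 * 2 ^ (d - 1) := by
    rw [← pow_succ']
    congr 1
    omega
  have hP2 : 2 ≤ (2:ℕ) ^ (d - 1) := by
    calc (2:ℕ) = 2 ^ 1 := (pow_one 2).symm
    _ ≤ 2 ^ (d-1) := Nat.pow_le_pow_right (by norm_num) (by omega)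
  have hN3 : 3 ≤ N := by omega
  have hxm : x % N < N := Nat.mod_lt _ (by omega)
  have key : sBin d (2 * x) = pc ((2 * (x % N)) % N) := by
    rw [sBin_eq_pc]
    have h : 2 * (x % N) ≡ 2 * x [MOD N] := (Nat.mod_modEq x N).mul_left 2
    rw [← hNdef, h]
  set r := x % N with hr
  have hgoal : sBin d x = pc r := sBin_eq_pc d x
  by_cases h : 2 * r < N
  · rw [key, Nat.mod_eq_of_lt h, pc_two_mul, hgoal]
  · push_neg at h
    have h1 : (2 * r) % N = 2 * r - N := by
      rw [Nat.mod_eq_sub_mod h]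
      exact Nat.mod_eq_of_lt (by omega)
    set P := (2:ℕ) ^ (d - 1) with hP
    have h2 : 2 * r - N = 2 * (r - P) + 1 := by omega
    rw [key, h1, h2, pc_two_mul_add_one]
    have h3 : pc r = pc (r - P) + pc 1 := by
      conv_lhs => rw [show r = (r - P) + P * 1 by omega]
      exact pc_add_pow_mul (d-1) (r-P) 1 (by omega)
    rw [pc_one] at h3
    omega

lemma sBin_pow_mul (d : ℕ) (hd : 2 ≤ d) (j x : ℕ) : sBin d (2 ^ j * x) = sBin d x := by
  induction j with
  | zero => rw [pow_zero, one_mul]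
  | succ j ih =>
    have : 2 ^ (j+1) * x = 2 * (2 ^ j * x) := by ring
    rw [this, sBin_two_mul _ _ hd, ih]

-- core lemma: no small periods for elements satisfying the condition
lemma core (d k t b : ℕ) (ht : t ∣ d) (ht0 : 0 < t) (htd : t < d)
    (hb0 : 0 < b) (hbN : b < 2 ^ d - 1)
    (hcond : sBin d b + sBin d ((k - 1) * b) = sBin d (k * b) + 1)
    (hper : 2 ^ t * b ≡ b [MOD 2 ^ d - 1]) : False := by
  set N := 2 ^ d - 1 with hNdef
  obtain ⟨m, hm⟩ := ht
  set M := (2:ℕ) ^ t - 1 with hMdef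
  have hM0 : 0 < M := by
    have : (2:ℕ) ≤ 2 ^ t := by calc (2:ℕ) = 2^1 := (pow_one 2).symm
                                   _ ≤ 2 ^ t := Nat.pow_le_pow_right (by norm_num) ht0
    omega
  set R := ∑ i ∈ Finset.range m, 2 ^ (t * i) with hRdef
  have hgeom : M * R + 1 = 2 ^ (t * m) := geom t m
  have hN : N = M * R := by
    have h2 : (0:ℕ) < 2 ^ (t*m) := by positivity
    rw [hNdef, hm]
    omega
  have hm2 : 2 ≤ m := by
    rcases m with _ | _ | m
    · omega
    · simp at hm; omega
    · omega
  have hR0 : 0 < R := by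
    apply Finset.sum_pos (fun i _ => by positivity)
    exact ⟨0, Finset.mem_range.2 (by omega)⟩
  -- N divides (2^t - 1) * b
  have hdvd : N ∣ M * b := by
    have hle : b ≤ 2 ^ t * b := Nat.le_mul_of_pos_left _ (by positivity)
    have := (Nat.modEq_iff_dvd' hle).1 hper.symm
    have heq : 2 ^ t * b - b = M * b := by
      rw [hMdef, Nat.sub_mul, one_mul]
    rwa [heq] at this
  have hRb : R ∣ b := by
    rw [hN] at hdvd
    exact (mul_dvd_mul_iff_left (by omega : M ≠ 0)).1 hdvd
  obtain ⟨c, hc⟩ := hRb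
  have hc0 : 0 < c := by
    rcases Nat.eq_zero_or_pos c with rfl | h
    · simp at hc; omega
    · exact h
  have hcM : c < M := by
    by_contra hcon
    push_neg at hcon
    have : M * R ≤ R * c := by
      rw [mul_comm M R]; exact Nat.mul_le_mul_left R hcon
    omega
  have hMlt : M < 2 ^ t := by
    have : (0:ℕ) < 2 ^ t := by positivity
    omega
  have hcpow : ∀ y : ℕ, y % M < 2 ^ t := fun y => by
    have h : y % M < M := Nat.mod_lt _ hM0
    omega
  -- key: sBin d (x * R) = m * sBin t x
  have keyS : ∀ x : ℕ, sBin d (x * R) = m * sBin t x := by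
    intro x
    have hsplit : x * R = (x % M) * R + N * (x / M) := by
      conv_lhs => rw [show x = M * (x / M) + x % M from (Nat.div_add_mod x M).symm]
      rw [hN]; ring
    have hlt : (x % M) * R < N := by
      rw [hN]
      have h1 : x % M < M := Nat.mod_lt _ hM0
      calc (x % M) * R < M * R := by
            apply Nat.mul_lt_mul_of_lt_of_le h1 (le_refl R) hR0
        _ = M * R := rfl
    have hmod : (x * R) % N = (x % M) * R := by
      rw [hsplit, Nat.add_mul_mod_self_left]
      exact Nat.mod_eq_of_lt hlt
    rw [sBin_eq_pc, ← hNdef, hmod, pc_mul_geom t m (x % M) (hcpow x), sBin_eq_pc, ← hMdef]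
  -- transform the condition
  have e1 : b = c * R := by rw [hc]; ring
  rw [e1] at hcond
  rw [show (k - 1) * (c * R) = ((k - 1) * c) * R by ring] at hcond
  rw [show k * (c * R) = (k * c) * R by ring] at hcond
  rw [keyS, keyS, keyS] at hcond
  -- m * A + m * B = m * C + 1 with m ≥ 2 : contradiction
  set A := sBin t c
  set B' := sBin t ((k-1)*c)
  set C := sBin t (k*c)
  have hmm : m * (A + B') = m * C + 1 := by rw [mul_add]; omega
  have hdvd1 : m ∣ 1 := by
    have h1 : m ∣ m * C + 1 := hmm ▸ dvd_mul_right m (A + B')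
    exact (Nat.dvd_add_right (dvd_mul_right m C)).1 h1
  have := Nat.le_of_dvd one_pos hdvd1
  omega

-- gcd closure of the period set
lemma period_mul (N b : ℕ) (s : ℕ) (hs : 2 ^ s * b ≡ b [MOD N]) :
    ∀ q : ℕ, 2 ^ (q * s) * b ≡ b [MOD N] := by
  intro q
  induction q with
  | zero => simpa using Nat.ModEq.refl b
  | succ q ih =>
    have h : 2 ^ ((q+1) * s) * b = 2 ^ (q * s) * (2 ^ s * b) := by
      rw [← mul_assoc, ← pow_add]; ring_nf
    rw [h]
    calc 2 ^ (q*s) * (2 ^ s * b) ≡ 2 ^ (q*s) * b [MOD N] := hs.mul_left _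
      _ ≡ b [MOD N] := ih

lemma period_gcd (N b : ℕ) (hco : Nat.Coprime 2 N) :
    ∀ s t : ℕ, 2 ^ s * b ≡ b [MOD N] → 2 ^ t * b ≡ b [MOD N] →
      2 ^ (Nat.gcd s t) * b ≡ b [MOD N] := by
  intro s
  induction s using Nat.strong_induction_on with
  | _ s ih =>
    intro t hs ht
    rcases Nat.eq_zero_or_pos s with rfl | hs0
    · rwa [Nat.gcd_zero_left]
    · rw [Nat.gcd_rec]
      have hmod : 2 ^ (t % s) * b ≡ b [MOD N] := by
        have h1 : 2 ^ (s * (t / s)) * b ≡ b [MOD N] := by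
          have h0 := period_mul N b s hs (t / s)
          rwa [Nat.mul_comm (t / s) s] at h0
        have h2 : 2 ^ (s * (t / s)) * (2 ^ (t % s) * b) ≡ 2 ^ (s * (t / s)) * b [MOD N] := by
          have he : 2 ^ (s * (t / s)) * (2 ^ (t % s) * b) = 2 ^ t * b := by
            rw [← mul_assoc, ← pow_add]
            congr 2
            exact Nat.div_add_mod t s
          rw [he]
          exact ht.trans h1.symm
        exact Nat.ModEq.cancel_left_of_coprime ((hco.pow_left _).symm) h2
      exact ih (t % s) (Nat.mod_lt t hs0) s hmod hs

/-- `d` divides `B k d`. -/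
theorem stmt_6 (d k : ℕ) (hd : 2 ≤ d) (hk : 2 ≤ k)
    (h1 : Nat.Coprime k (2 ^ d - 1)) (h2 : Nat.Coprime (k - 1) (2 ^ d - 1)) :
    d ∣ B k d := by
  set N := 2 ^ d - 1 with hNdef
  have hN3 : 3 ≤ N := by
    have h4 : (4:ℕ) ≤ 2 ^ d := by
      calc (4:ℕ) = 2 ^ 2 := by norm_num
        _ ≤ 2 ^ d := Nat.pow_le_pow_right (by norm_num) hd
    omega
  have hN0 : 0 < N := by omega
  have hd0 : 0 < d := by omega
  have hco2 : Nat.Coprime 2 N := by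
    have hpd : (2:ℕ) ^ d = 2 * 2 ^ (d - 1) := by
      rw [← pow_succ']
      congr 1
      omega
    have hodd : N % 2 = 1 := by omega
    have : Nat.gcd 2 N = 1 := by
      rw [Nat.gcd_rec, hodd]
      simp
    exact this
  -- 2^d ≡ 1 [MOD N]
  have h2d : (1:ℕ) ≡ 2 ^ d [MOD N] := by
    apply (Nat.modEq_iff_dvd' (Nat.one_le_two_pow)).2
    rw [← hNdef]
  -- reduction of exponents
  have hpow : ∀ n : ℕ, 2 ^ (n % d) ≡ 2 ^ n [MOD N] := by
    intro n
    conv_rhs => rw [show n = d * (n / d) + n % d from (Nat.div_add_mod n d).symm]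
    rw [pow_add, pow_mul]
    have hp : (1:ℕ) ≡ (2 ^ d) ^ (n / d) [MOD N] := by simpa using h2d.pow (n / d)
    calc 2 ^ (n % d) = 1 * 2 ^ (n % d) := (one_mul _).symm
      _ ≡ (2 ^ d) ^ (n / d) * 2 ^ (n % d) [MOD N] :=
          Nat.ModEq.mul_right _ hp
  set cond : ℕ → Prop := fun a => sBin d a + sBin d ((k - 1) * a) = sBin d (k * a) + 1 with hcond
  set S : Finset ℕ := (Finset.Ioo 0 N).filter (fun a => sBin d a + sBin d ((k - 1) * a) = sBin d (k * a) + 1) with hSdef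
  have hBS : B k d = S.card := rfl
  set orb : ℕ → Finset ℕ := fun a => (Finset.range d).image (fun j => 2 ^ j * a % N) with horb
  -- raw index composition
  have orb_index : ∀ (i j a : ℕ), 2 ^ i * (2 ^ j * a % N) % N = 2 ^ (i + j) * a % N := by
    intro i j a
    have h : 2 ^ i * (2 ^ j * a % N) ≡ 2 ^ (i+j) * a [MOD N] := by
      calc 2 ^ i * (2 ^ j * a % N) ≡ 2 ^ i * (2 ^ j * a) [MOD N] :=
            (Nat.mod_modEq _ N).mul_left _
        _ = 2 ^ (i+j) * a := by rw [← mul_assoc, ← pow_add]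
    exact h
  have mem_orb_self : ∀ a : ℕ, a < N → a ∈ orb a := by
    intro a ha
    simp only [horb, Finset.mem_image]
    exact ⟨0, Finset.mem_range.2 hd0, by simp [Nat.mod_eq_of_lt ha]⟩
  have orb_sub : ∀ (a j : ℕ), orb (2 ^ j * a % N) ⊆ orb a := by
    intro a j x hx
    simp only [horb, Finset.mem_image, Finset.mem_range] at hx ⊢
    obtain ⟨i, hi, rfl⟩ := hx
    refine ⟨(i + j) % d, Nat.mod_lt _ hd0, ?_⟩
    rw [orb_index]
    have := (hpow (i+j)).mul_right a
    exact this
  have mem_orb_symm : ∀ a y : ℕ, a < N → y ∈ orb a → a ∈ orb y := by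
    intro a y ha hy
    simp only [horb, Finset.mem_image, Finset.mem_range] at hy
    obtain ⟨j, hj, rfl⟩ := hy
    rcases Nat.eq_zero_or_pos j with rfl | hj0
    · simp only [pow_zero, one_mul, Nat.mod_eq_of_lt ha]
      exact mem_orb_self a ha
    · simp only [horb, Finset.mem_image, Finset.mem_range]
      refine ⟨d - j, by omega, ?_⟩
      rw [orb_index]
      have hdj : d - j + j = d := by omega
      rw [hdj]
      have : 2 ^ d * a ≡ 1 * a [MOD N] := (h2d.symm).mul_right a
      rw [one_mul] at this
      rw [this, Nat.mod_eq_of_lt ha]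
  have orb_sub' : ∀ a y : ℕ, y ∈ orb a → orb y ⊆ orb a := by
    intro a y hy
    simp only [horb, Finset.mem_image, Finset.mem_range] at hy
    obtain ⟨j, hj, rfl⟩ := hy
    exact orb_sub a j
  have orb_eq : ∀ a y : ℕ, a < N → y ∈ orb a → orb y = orb a := by
    intro a y ha hy
    apply Finset.Subset.antisymm (orb_sub' a y hy)
    exact orb_sub' y a (mem_orb_symm a y ha hy)
  -- orbit stays in S
  have horbS : ∀ a ∈ S, orb a ⊆ S := by
    intro a haS x hx
    simp only [hSdef, Finset.mem_filter, Finset.mem_Ioo] at haS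
    obtain ⟨⟨ha0, haN⟩, hacond⟩ := haS
    simp only [horb, Finset.mem_image, Finset.mem_range] at hx
    obtain ⟨j, hj, rfl⟩ := hx
    have hxN : 2 ^ j * a % N < N := Nat.mod_lt _ hN0
    have hx0 : 0 < 2 ^ j * a % N := by
      rcases Nat.eq_zero_or_pos (2 ^ j * a % N) with hz | h
      · exfalso
        have hdvd : N ∣ 2 ^ j * a := Nat.dvd_of_mod_eq_zero hz
        have : N ∣ a := Nat.Coprime.dvd_of_dvd_mul_left ((hco2.pow_left j).symm) hdvd
        have := Nat.le_of_dvd ha0 this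
        omega
      · exact h
    simp only [hSdef, Finset.mem_filter, Finset.mem_Ioo]
    refine ⟨⟨hx0, hxN⟩, ?_⟩
    have e1 : sBin d (2 ^ j * a % N) = sBin d a := by
      rw [sBin_congr d (Nat.mod_modEq _ N), sBin_pow_mul d hd]
    have e2 : sBin d ((k-1) * (2 ^ j * a % N)) = sBin d ((k-1) * a) := by
      have h' : (k-1) * (2 ^ j * a % N) ≡ (k-1) * (2 ^ j * a) [MOD N] :=
        (Nat.mod_modEq _ N).mul_left _
      rw [sBin_congr d h', show (k-1) * (2 ^ j * a) = 2 ^ j * ((k-1) * a) by ring,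
        sBin_pow_mul d hd]
    have e3 : sBin d (k * (2 ^ j * a % N)) = sBin d (k * a) := by
      have h' : k * (2 ^ j * a % N) ≡ k * (2 ^ j * a) [MOD N] :=
        (Nat.mod_modEq _ N).mul_left _
      rw [sBin_congr d h', show k * (2 ^ j * a) = 2 ^ j * (k * a) by ring,
        sBin_pow_mul d hd]
    rw [e1, e2, e3]
    exact hacond
  -- injectivity: orbit has exactly d elements
  have card_orb : ∀ a ∈ S, (orb a).card = d := by
    intro a haS
    simp only [hSdef, Finset.mem_filter, Finset.mem_Ioo] at haS
    obtain ⟨⟨ha0, haN⟩, hacond⟩ := haS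
    have hinj : Set.InjOn (fun j => 2 ^ j * a % N) (Finset.range d) := by
      intro i hi j hj hij
      simp only [Finset.coe_range, Set.mem_Iio, Finset.mem_coe, Finset.mem_range] at hi hj
      by_contra hne
      -- wlog i < j
      have key : ∀ i j : ℕ, i < j → j < d → 2 ^ i * a % N = 2 ^ j * a % N → False := by
        intro i j hij' hjd heq
        have h1 : 2 ^ i * (2 ^ (j - i) * a) ≡ 2 ^ i * a [MOD N] := by
          have he : 2 ^ i * (2 ^ (j-i) * a) = 2 ^ j * a := by
            rw [← mul_assoc, ← pow_add]
            congr 2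
            omega
          rw [he]
          exact heq.symm
        have h2 : 2 ^ (j - i) * a ≡ a [MOD N] :=
          Nat.ModEq.cancel_left_of_coprime ((hco2.pow_left i).symm) h1
        have hPd : 2 ^ d * a ≡ a [MOD N] := by
          have : 2 ^ d * a ≡ 1 * a [MOD N] := (h2d.symm).mul_right a
          rwa [one_mul] at this
        have hg : 2 ^ (Nat.gcd (j - i) d) * a ≡ a [MOD N] :=
          period_gcd N a hco2 (j - i) d h2 hPd
        have hg_dvd : Nat.gcd (j - i) d ∣ d := Nat.gcd_dvd_right _ _
        have hg0 : 0 < Nat.gcd (j - i) d := Nat.gcd_pos_of_pos_left _ (by omega)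
        have hgle : Nat.gcd (j - i) d ≤ j - i := Nat.gcd_le_left _ (by omega)
        have hgd : Nat.gcd (j - i) d < d := by omega
        exact core d k (Nat.gcd (j-i) d) a hg_dvd hg0 hgd ha0 haN hacond hg
      rcases Nat.lt_or_ge i j with h | h
      · exact key i j h hj hij
      · exact key j i (by omega) hi hij.symm
    calc (orb a).card = (Finset.range d).card := Finset.card_image_of_injOn hinj
      _ = d := Finset.card_range d
  -- representatives
  have horb_ne : ∀ a : ℕ, (orb a).Nonempty :=
    fun a => ⟨2 ^ 0 * a % N, Finset.mem_image_of_mem _ (Finset.mem_range.2 hd0)⟩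
  set rep : ℕ → ℕ := fun a => (orb a).min' (horb_ne a) with hrep
  have hrep_mem : ∀ a : ℕ, rep a ∈ orb a := fun a => Finset.min'_mem _ _
  have hrep_eq : ∀ a y : ℕ, a < N → y ∈ orb a → rep y = rep a := by
    intro a y ha hy
    have h := orb_eq a y ha hy
    apply le_antisymm
    · exact Finset.min'_le _ _ (by rw [h]; exact hrep_mem a)
    · exact Finset.min'_le _ _ (by rw [← h]; exact hrep_mem y)
  -- the count
  rw [hBS, Finset.card_eq_sum_card_image rep S]
  apply Finset.dvd_sum
  intro b hb
  obtain ⟨a, haS, rfl⟩ := Finset.mem_image.1 hb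
  have haN : a < N := by
    simp only [hSdef, Finset.mem_filter, Finset.mem_Ioo] at haS
    omega
  have hfil : S.filter (fun x => rep x = rep a) = orb a := by
    ext x
    simp only [Finset.mem_filter]
    constructor
    · rintro ⟨hxS, hrx⟩
      have hxN : x < N := by
        simp only [hSdef, Finset.mem_filter, Finset.mem_Ioo] at hxS
        omega
      have h1 : orb (rep x) = orb x := orb_eq x (rep x) hxN (hrep_mem x)
      have h2 : orb (rep a) = orb a := orb_eq a (rep a) haN (hrep_mem a)
      have : orb x = orb a := by rw [← h1, hrx, h2]
      rw [← this]
      exact mem_orb_self x hxN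
    · intro hx
      exact ⟨horbS a haS hx, hrep_eq a x haN hx⟩
  rw [hfil, card_orb a haS]
end

section
/- Let u ≥ 5 be an odd integer. Then 2·F_{(3u−1)/2} − 1 is not a power of 3, and 2·F_{(5u−1)/2} − 1 is not a power of 5. (Equivalently, writing A_6(d) = 2·F_{(d−1)/2} − 1 for odd d, A_6(3u) is never a power of 3 and A_6(5u) is never a power of 5.) -/
set_option maxRecDepth 40000

private lemma fib_add_period (M P : ℕ) (h0 : Nat.fib P % M = 0)
    (h1 : Nat.fib (P + 1) % M = 1) (i : ℕ) :
    Nat.fib (i + P) % M = Nat.fib i % M := by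
  cases i with
  | zero => simpa using h0
  | succ t =>
    rw [show t + 1 + P = P + t + 1 by ring, Nat.fib_add, Nat.add_mod,
      Nat.mul_mod, Nat.mul_mod (Nat.fib (P + 1)), h0, h1]
    simp [Nat.mod_mod_of_dvd, Nat.mod_mod]

private lemma fib_mod_period (M P : ℕ) (hP : 0 < P) (h0 : Nat.fib P % M = 0)
    (h1 : Nat.fib (P + 1) % M = 1) (i : ℕ) :
    Nat.fib i % M = Nat.fib (i % P) % M := by
  have aux : ∀ q r, Nat.fib (q * P + r) % M = Nat.fib r % M := by
    intro q
    induction q with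
    | zero => simp
    | succ t ih =>
      intro r
      rw [show (t + 1) * P + r = (t * P + r) + P by ring,
        fib_add_period M P h0 h1, ih]
  conv_lhs => rw [← Nat.div_add_mod i P]
  rw [show P * (i / P) + i % P = (i / P) * P + i % P by ring, aux]

private lemma pow_mod_period (a M P : ℕ) (hP : 0 < P) (h : a ^ P % M = 1 % M)
    (n : ℕ) : a ^ n % M = a ^ (n % P) % M := by
  conv_lhs => rw [← Nat.div_add_mod n P]
  rw [pow_add, pow_mul, Nat.mul_mod, Nat.pow_mod, h, ← Nat.pow_mod, one_pow,
    ← Nat.mul_mod, one_mul]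

/-- Fibonacci numbers normalized so that `F 0 = F 1 = 1`. -/
def Fib' (n : ℕ) : ℕ := Nat.fib (n + 1)

/-- For odd `u ≥ 5`, `A_6(3u) = 2 F_{(3u-1)/2} - 1` is never a power of 3 and
`A_6(5u) = 2 F_{(5u-1)/2} - 1` is never a power of 5. -/
theorem stmt_16 (u : ℕ) (hodd : Odd u) (hu : 5 ≤ u) :
    (∀ n : ℕ, 2 * Fib' ((3 * u - 1) / 2) - 1 ≠ 3 ^ n) ∧
    (∀ n : ℕ, 2 * Fib' ((5 * u - 1) / 2) - 1 ≠ 5 ^ n) := by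
  obtain ⟨k, hk⟩ := hodd
  have hk2 : 2 ≤ k := by omega
  constructor
  · intro n h
    have hi : (3 * u - 1) / 2 = 3 * k + 1 := by omega
    rw [hi] at h
    unfold Fib' at h
    set i := 3 * k + 1 + 1 with hidef
    have hFge : 21 ≤ Nat.fib i := by
      calc (21 : ℕ) = Nat.fib 8 := by decide
      _ ≤ Nat.fib i := Nat.fib_mono (by omega)
    have h2F : 2 * Nat.fib i = 3 ^ n + 1 := by omega
    have hn3 : 3 ≤ n := by
      by_contra hc
      interval_cases n <;> omega
    have h27 : (27 : ℕ) ∣ 3 ^ n := by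
      have := pow_dvd_pow 3 hn3
      norm_num at this; exact this
    have hmod27 : 2 * Nat.fib i % 27 = 1 := by omega
    have hper27 : Nat.fib i % 27 = Nat.fib (i % 72) % 27 :=
      fib_mod_period 27 72 (by norm_num) (by decide) (by decide) i
    have hj27 : 2 * Nat.fib (i % 72) % 27 = 1 := by
      rw [Nat.mul_mod, ← hper27, ← Nat.mul_mod]; exact hmod27
    have hjlt : i % 72 < 72 := Nat.mod_lt _ (by norm_num)
    have hj3 : i % 72 % 3 = 2 := by omega
    have hj : i % 72 = 29 := by
      have key : ∀ m < 72, m % 3 = 2 → 2 * Nat.fib m % 27 = 1 → m = 29 := by decide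
      exact key _ hjlt hj3 hj27
    have hper107 : Nat.fib i % 107 = Nat.fib 29 % 107 := by
      rw [fib_mod_period 107 72 (by norm_num) (by decide) (by decide) i, hj]
    have h80 : 3 ^ n % 107 = 80 := by
      have : 2 * Nat.fib i % 107 = 81 := by
        rw [Nat.mul_mod, hper107, ← Nat.mul_mod]; decide
      omega
    have hpp : 3 ^ n % 107 = 3 ^ (n % 53) % 107 :=
      pow_mod_period 3 107 53 (by norm_num) (by decide) n
    have key2 : ∀ m < 53, 3 ^ m % 107 ≠ 80 := by decide
    exact key2 (n % 53) (Nat.mod_lt _ (by norm_num)) (hpp ▸ h80)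
  · intro n h
    have hi : (5 * u - 1) / 2 = 5 * k + 2 := by omega
    rw [hi] at h
    unfold Fib' at h
    set i := 5 * k + 2 + 1 with hidef
    have hFge : 233 ≤ Nat.fib i := by
      calc (233 : ℕ) = Nat.fib 13 := by decide
      _ ≤ Nat.fib i := Nat.fib_mono (by omega)
    have h2F : 2 * Nat.fib i = 5 ^ n + 1 := by omega
    have hn3 : 3 ≤ n := by
      by_contra hc
      interval_cases n <;> omega
    have h125 : (125 : ℕ) ∣ 5 ^ n := by
      have := pow_dvd_pow 5 hn3
      norm_num at this; exact this
    have hmod125 : 2 * Nat.fib i % 125 = 1 := by omega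
    have hper125 : Nat.fib i % 125 = Nat.fib (i % 500) % 125 :=
      fib_mod_period 125 500 (by norm_num) (by decide) (by decide) i
    have hj125 : 2 * Nat.fib (i % 500) % 125 = 1 := by
      rw [Nat.mul_mod, ← hper125, ← Nat.mul_mod]; exact hmod125
    have hjlt : i % 500 < 500 := Nat.mod_lt _ (by norm_num)
    have hj5 : i % 500 % 5 = 3 := by omega
    have hj : i % 500 = 293 := by
      have key : ∀ m < 500, m % 5 = 3 → 2 * Nat.fib m % 125 = 1 → m = 293 := by decide
      exact key _ hjlt hj5 hj125
    have hi250 : i % 250 = 43 := by omega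
    have hper251 : Nat.fib i % 251 = Nat.fib 43 % 251 := by
      rw [fib_mod_period 251 250 (by norm_num) (by decide) (by decide) i, hi250]
    have h235 : 5 ^ n % 251 = 235 := by
      have : 2 * Nat.fib i % 251 = 236 := by
        rw [Nat.mul_mod, hper251, ← Nat.mul_mod]; decide
      omega
    have hpp : 5 ^ n % 251 = 5 ^ (n % 25) % 251 :=
      pow_mod_period 5 251 25 (by norm_num) (by decide) n
    have key2 : ∀ m < 25, 5 ^ m % 251 ≠ 235 := by decide
    exact key2 (n % 25) (Nat.mod_lt _ (by norm_num)) (hpp ▸ h235)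
end

section
/- Let d > 1 be odd. Let M₅ be the square matrix indexed by F_{2^d}^* whose (u,v) entry is the number of x ∈ F_{2^d}^* with v·u⁻¹ = x^5 + x^4, and let N₅ be the matrix obtained from M₅ by replacing every nonzero entry with 1. Then the rank over F₂ of N₅ equals the rank over F₂ of M₅ (i.e., of the reduction of M₅ modulo 2). -/
/-- The rank of a (finite) square matrix over a commutative ring `K`. -/
noncomputable def matRank (K : Type*) [CommRing K] {ι : Type*} [Finite ι]
    (M : Matrix ι ι K) : ℕ :=
  letI : Fintype ι := Fintype.ofFinite ι
  M.rank

/-- The `(u,v)` entry of the circulant matrix `M_k`: the number of `x ∈ F_{2^d}ˣ` with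
`v * u⁻¹ = x^k + x^{k-1}`. -/
noncomputable def Mmat (k d : ℕ) (u v : (GaloisField 2 d)ˣ) : ℕ :=
  Nat.card {x : (GaloisField 2 d)ˣ //
    (x : GaloisField 2 d) ^ k + (x : GaloisField 2 d) ^ (k - 1) =
      ((v * u⁻¹ : (GaloisField 2 d)ˣ) : GaloisField 2 d)}

/-!
Writing `x = z + 1` turns `x ^ 5 + x ^ 4 = c` into `z ^ 5 + z = c`, so it suffices that for `c ≠ 0`
this quintic never has an even, nonzero number of roots in `F = 𝔽_{2^d}`. Given two roots `u ≠ v`,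
the remaining roots are those of a cubic cofactor, which vanishes at neither `u` nor `v`. In
characteristic two a cubic with two roots `w ≠ x` has the third root `a + w + x`, where `a` is the
coefficient of `z ^ 2`; it is distinct from `w` and `x` here because the cofactor does not vanish
at `a = u + v`. So the cofactor has 0, 1 or 3 roots, and it remains to see that it has one. Shifted
by `u + v` it becomes `y ^ 3 + p y = q` with `p ^ 3 / q ^ 2` in the image of `t ↦ t ^ 2 + t`, which
is solvable because `z ↦ z ^ 3 + z` permutes `{z ≠ 0 | z⁻¹ = t ^ 2 + t for some t}` as long as `F`
has no primitive cube root of unity, i.e. as long as `3 ∤ 2 ^ d - 1`.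
-/

def IsArtinSchreier {F : Type*} [Field F] (a : F) : Prop := ∃ t : F, t ^ 2 + t = a

section CharTwo

open Finset

variable {F : Type*} [Field F] [CharP F 2]

theorem cubic_eq_mul_of_roots {a b c w x : F} (hw : w ^ 3 + a * w ^ 2 + b * w + c = 0)
    (hx : x ^ 3 + a * x ^ 2 + b * x + c = 0) (hwx : w ≠ x) (z : F) :
    z ^ 3 + a * z ^ 2 + b * z + c = (z + w) * (z + x) * (z + (a + w + x)) := by
  have hq : w ^ 2 + w * x + x ^ 2 + a * (w + x) + b = 0 := by
    refine (mul_eq_zero.1 ?_).resolve_left (sub_ne_zero.2 hwx)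
    linear_combination hw - hx
  linear_combination (norm := (ring_nf; reduce_mod_char!)) hw + (z + w) * hq

theorem card_cubic_roots_le_one_or_eq_three [Fintype F] [DecidableEq F] {a b c : F}
    (ha : a * b + c ≠ 0) :
    #{z | z ^ 3 + a * z ^ 2 + b * z + c = 0} ≤ 1 ∨
      #{z | z ^ 3 + a * z ^ 2 + b * z + c = 0} = 3 := by
  refine (le_or_gt _ 1).imp_right fun h ↦ ?_
  obtain ⟨w, hw, x, hx, hwx⟩ := one_lt_card.1 h
  simp only [mem_filter, mem_univ, true_and] at hw hx
  -- the third root `a + w + x` collides with `w` or `x` only if `a` is a root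
  have hxa : x ≠ a := by
    rintro rfl
    exact ha (by linear_combination (norm := (ring_nf; reduce_mod_char!)) hx)
  have hwa : w ≠ a := by
    rintro rfl
    exact ha (by linear_combination (norm := (ring_nf; reduce_mod_char!)) hw)
  have hroots : ({z | z ^ 3 + a * z ^ 2 + b * z + c = 0} : Finset F) = {w, x, a + w + x} := by
    ext z
    rw [mem_filter, cubic_eq_mul_of_roots hw hx hwx z]
    simp only [mem_univ, true_and, mul_eq_zero, CharTwo.add_eq_zero, mem_insert, mem_singleton,
      or_assoc]
  rw [hroots, card_eq_three]
  refine ⟨w, x, a + w + x, hwx, fun h ↦ hxa ?_, fun h ↦ hwa ?_, rfl⟩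
  · linear_combination (norm := (ring_nf; reduce_mod_char!)) h
  · linear_combination (norm := (ring_nf; reduce_mod_char!)) h

theorem quintic_pair_relations {c u v : F} (hu : u ^ 5 + u = c) (hv : v ^ 5 + v = c)
    (huv : u ≠ v) :
    (u + v) ^ 4 + (u + v) ^ 2 * (u * v) + (u * v) ^ 2 = 1 ∧ c = u * v * (u + v) ^ 3 := by
  have hrel : (u + v) ^ 4 + (u + v) ^ 2 * (u * v) + (u * v) ^ 2 = 1 := by
    refine mul_left_cancel₀ (mt CharTwo.add_eq_zero.1 huv) ?_
    linear_combination (norm := (ring_nf; reduce_mod_char!)) hu - hv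
  exact ⟨hrel, by linear_combination (norm := (ring_nf; reduce_mod_char!)) hv + v * hrel⟩

theorem quintic_eq_mul_cubic {c u v : F} (hu : u ^ 5 + u = c) (hv : v ^ 5 + v = c)
    (huv : u ≠ v) (z : F) :
    z ^ 5 + z + c = (z + u) * (z + v) *
      (z ^ 3 + (u + v) * z ^ 2 + ((u + v) ^ 2 + u * v) * z + (u + v) ^ 3) := by
  obtain ⟨hrel, hc⟩ := quintic_pair_relations hu hv huv
  linear_combination (norm := (ring_nf; reduce_mod_char!)) z * hrel + hc

theorem quintic_cofactor_ne_zero_of_root {c u v : F} (hc : c ≠ 0) (hu : u ^ 5 + u = c)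
    (hv : v ^ 5 + v = c) (huv : u ≠ v) :
    u ^ 3 + (u + v) * u ^ 2 + ((u + v) ^ 2 + u * v) * u + (u + v) ^ 3 ≠ 0 := by
  intro h
  have hu1 : u ≠ 1 := by
    rintro rfl
    exact hc (by linear_combination (norm := (ring_nf; reduce_mod_char!)) -hu)
  -- `(u + v)` times the cofactor at `u` is the derivative `(u + 1) ^ 4` of `z ^ 5 + z + c` at `u`
  have hderiv : (u + v) * (u ^ 3 + (u + v) * u ^ 2 + ((u + v) ^ 2 + u * v) * u + (u + v) ^ 3) =
      (u + 1) ^ 4 := by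
    linear_combination (norm := (ring_nf; reduce_mod_char!)) (quintic_pair_relations hu hv huv).1
  rw [h, mul_zero, eq_comm, pow_eq_zero_iff four_ne_zero, CharTwo.add_eq_zero] at hderiv
  exact hu1 hderiv

theorem isArtinSchreier_inv_cube_add_self {z : F} (hz0 : z ≠ 0) (hz1 : z ≠ 1)
    (hz : IsArtinSchreier z⁻¹) : IsArtinSchreier (z ^ 3 + z)⁻¹ := by
  obtain ⟨t, ht⟩ := hz
  have hz1' : z + 1 ≠ 0 := mt CharTwo.add_eq_zero.1 hz1
  have hi : z * z⁻¹ = 1 := mul_inv_cancel₀ hz0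
  have hw : (z + 1) * (z + 1)⁻¹ = 1 := mul_inv_cancel₀ hz1'
  refine ⟨t + (z + 1)⁻¹, eq_inv_of_mul_eq_one_left ?_⟩
  linear_combination (norm := (ring_nf; reduce_mod_char!)) z * (z + 1) ^ 2 * ht + (z + 1) ^ 2 * hi
    + (z * ((z + 1) * (z + 1)⁻¹ + 1) + z * (z + 1)) * hw

theorem isArtinSchreier_one_of_cube_add_self_eq {a b : F} (ha : a ≠ 0) (hab : a ≠ b)
    (h : a ^ 3 + a = b ^ 3 + b) (hAS : IsArtinSchreier a⁻¹) : IsArtinSchreier (1 : F) := by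
  obtain ⟨t, ht⟩ := hAS
  have hrel : a ^ 2 + a * b + b ^ 2 = 1 := by
    refine mul_left_cancel₀ (mt CharTwo.add_eq_zero.1 hab) ?_
    linear_combination (norm := (ring_nf; reduce_mod_char!)) h
  have hi : a * a⁻¹ = 1 := mul_inv_cancel₀ ha
  refine ⟨b * a⁻¹ + t ^ 2, ?_⟩
  linear_combination (norm := (ring_nf; reduce_mod_char!)) (t ^ 2 + t + a⁻¹) * ht
    + a⁻¹ ^ 2 * hrel + (b * a⁻¹ + a * a⁻¹ + 1) * hi

theorem exists_cube_add_self_eq [Finite F] (hF : ¬ IsArtinSchreier (1 : F)) {k : F} (hk : k ≠ 0)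
    (hAS : IsArtinSchreier k⁻¹) : ∃ n : F, n ^ 3 + n = k := by
  -- `z ↦ z ^ 3 + z` is injective on the finite set `S`, hence maps it onto itself
  set S : Set F := {z | z ≠ 0 ∧ IsArtinSchreier z⁻¹}
  have hmaps : Set.MapsTo (fun z ↦ z ^ 3 + z) S S := by
    rintro z ⟨hz0, hz⟩
    have hz1 : z ≠ 1 := by
      rintro rfl
      exact hF (by simpa using hz)
    refine ⟨show z ^ 3 + z ≠ 0 from ?_, isArtinSchreier_inv_cube_add_self hz0 hz1 hz⟩
    rw [show z ^ 3 + z = z * (z + 1) ^ 2 by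
      linear_combination (norm := (ring_nf; reduce_mod_char!))]
    exact mul_ne_zero hz0 (pow_ne_zero 2 (mt CharTwo.add_eq_zero.1 hz1))
  have hinj : Set.InjOn (fun z ↦ z ^ 3 + z) S := by
    rintro a ⟨ha0, ha⟩ b - h
    by_contra hab
    exact hF (isArtinSchreier_one_of_cube_add_self_eq ha0 hab h ha)
  obtain ⟨n, -, hn⟩ := ((S.toFinite.injOn_iff_bijOn_of_mapsTo hmaps).1 hinj).surjOn ⟨hk, hAS⟩
  exact ⟨n, hn⟩

theorem exists_cube_add_mul_eq [Finite F] (hF : ¬ IsArtinSchreier (1 : F)) {p q : F}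
    (hp : p ≠ 0) (hq : q ≠ 0) (hAS : IsArtinSchreier (p ^ 3 / q ^ 2)) :
    ∃ y : F, y ^ 3 + p * y = q := by
  obtain ⟨n, hn⟩ := exists_cube_add_self_eq hF (k := q ^ 2 / p ^ 3) (by positivity)
    (by rwa [inv_div])
  obtain ⟨y, hy⟩ := isSquare_of_charTwo' (p * n)
  refine ⟨y, CharTwo.sq_injective ?_⟩
  -- by `y ^ 2 = p * n`, the squared equation reads `p ^ 3 * (n ^ 3 + n) = q ^ 2`
  have hp3 : p ^ 3 * (q ^ 2 / p ^ 3) = q ^ 2 := by field_simp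
  show (y ^ 3 + p * y) ^ 2 = q ^ 2
  linear_combination (norm := (ring_nf; reduce_mod_char!)) p ^ 3 * hn + hp3
    + (y ^ 4 + y ^ 2 * p * n + p ^ 2 * n ^ 2 + p ^ 2) * hy

theorem exists_quintic_cofactor_root [Finite F] (hF : ¬ IsArtinSchreier (1 : F)) {c u v : F}
    (hc : c ≠ 0) (hu : u ^ 5 + u = c) (hv : v ^ 5 + v = c) (huv : u ≠ v) :
    ∃ z : F, z ^ 3 + (u + v) * z ^ 2 + ((u + v) ^ 2 + u * v) * z + (u + v) ^ 3 = 0 := by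
  have hs : u + v ≠ 0 := mt CharTwo.add_eq_zero.1 huv
  have hp : u * v ≠ 0 := by
    refine mul_ne_zero ?_ ?_ <;> rintro rfl <;> simp_all
  -- shifting by `u + v` depresses the cofactor to `y ^ 3 + u v y + u v (u + v)`
  have hAS : IsArtinSchreier ((u * v) ^ 3 / (u * v * (u + v)) ^ 2) := by
    refine ⟨u / (u + v), ?_⟩
    field_simp
    linear_combination (norm := (ring_nf; reduce_mod_char!))
  obtain ⟨y, hy⟩ := exists_cube_add_mul_eq hF hp (mul_ne_zero hp hs) hAS
  exact ⟨u + v + y, by linear_combination (norm := (ring_nf; reduce_mod_char!)) hy⟩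

theorem card_quintic_roots_eq_zero_or_odd [Fintype F] [DecidableEq F]
    (hF : ¬ IsArtinSchreier (1 : F)) {c : F} (hc : c ≠ 0) :
    #{z | z ^ 5 + z = c} = 0 ∨ Odd #{z | z ^ 5 + z = c} := by
  obtain h | h := le_or_gt #{z | z ^ 5 + z = c} 1
  · obtain h | h := Nat.le_one_iff_eq_zero_or_eq_one.1 h
    · exact .inl h
    · exact .inr (h ▸ odd_one)
  obtain ⟨u, hu, v, hv, huv⟩ := one_lt_card.1 h
  simp only [mem_filter, mem_univ, true_and] at hu hv
  set G : Finset F := {z | z ^ 3 + (u + v) * z ^ 2 + ((u + v) ^ 2 + u * v) * z + (u + v) ^ 3 = 0}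
  have hroots : ({z | z ^ 5 + z = c} : Finset F) = insert u (insert v G) := by
    ext z
    rw [mem_filter, ← CharTwo.add_eq_zero, quintic_eq_mul_cubic hu hv huv z]
    simp only [G, mem_univ, true_and, mul_eq_zero, CharTwo.add_eq_zero, mem_insert, mem_filter,
      or_assoc]
  have huG : u ∉ insert v G := by
    simpa [G, huv] using quintic_cofactor_ne_zero_of_root hc hu hv huv
  have hvG : v ∉ G := by
    have := quintic_cofactor_ne_zero_of_root hc hv hu huv.symm
    simpa [G, add_comm, mul_comm] using this
  have hG : G.Nonempty := by
    obtain ⟨z, hz⟩ := exists_quintic_cofactor_root hF hc hu hv huv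
    exact ⟨z, by simpa [G] using hz⟩
  have hcoeff : (u + v) * ((u + v) ^ 2 + u * v) + (u + v) ^ 3 ≠ 0 := by
    rw [show (u + v) * ((u + v) ^ 2 + u * v) + (u + v) ^ 3 = u * v * (u + v) by
      linear_combination (norm := (ring_nf; reduce_mod_char!))]
    refine mul_ne_zero (mul_ne_zero ?_ ?_) (mt CharTwo.add_eq_zero.1 huv) <;>
      rintro rfl <;> simp_all
  rw [hroots, card_insert_of_notMem huG, card_insert_of_notMem hvG]
  right
  obtain h | h := card_cubic_roots_le_one_or_eq_three hcoeff
  · rw [le_antisymm h hG.card_pos]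
    decide
  · rw [h]
    decide

theorem natCard_units_pow_five_add_pow_four_eq [Fintype F] [DecidableEq F] {c : F} (hc : c ≠ 0) :
    Nat.card {x : Fˣ // (x : F) ^ 5 + (x : F) ^ 4 = c} = #{z | z ^ 5 + z = c} := by
  rw [← Fintype.card_subtype, ← Nat.card_eq_fintype_card]
  refine Nat.card_congr ?_
  -- `x ↦ x + 1`, since `(x + 1) ^ 5 + (x + 1) = x ^ 5 + x ^ 4` in characteristic two
  refine
    { toFun x := ⟨(x.1 : F) + 1, by linear_combination (norm := (ring_nf; reduce_mod_char!)) x.2⟩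
      invFun z := ⟨Units.mk0 (z + 1) fun h ↦ hc ?_, ?_⟩
      left_inv x := by ext; simp [CharTwo.add_cancel_right]
      right_inv z := by ext; simp [CharTwo.add_cancel_right] }
  · linear_combination (norm := (ring_nf; reduce_mod_char!))
      -z.2 + ((z : F) ^ 4 + (z : F) ^ 3 + (z : F) ^ 2 + (z : F)) * h
  · rw [Units.val_mk0]
    linear_combination (norm := (ring_nf; reduce_mod_char!)) z.2

theorem not_isArtinSchreier_one [Fintype F] (h3 : ¬ 3 ∣ Fintype.card F - 1) :
    ¬ IsArtinSchreier (1 : F) := by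
  rintro ⟨t, ht⟩
  have ht0 : t ≠ 0 := by rintro rfl; simp at ht
  have ht3 : t ^ 3 = 1 := by
    linear_combination (norm := (ring_nf; reduce_mod_char!)) (t + 1) * ht
  have hcop : Nat.Coprime 3 (Fintype.card F - 1) :=
    (Nat.Prime.coprime_iff_not_dvd Nat.prime_three).2 h3
  have := (pow_eq_one_iff_of_coprime hcop).1 ⟨ht3, FiniteField.pow_card_sub_one_eq_one t ht0⟩
  subst this
  exact one_ne_zero (by linear_combination ht)

end CharTwo

theorem not_three_dvd_two_pow_sub_one {d : ℕ} (hd : Odd d) : ¬ 3 ∣ 2 ^ d - 1 := by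
  obtain ⟨k, rfl⟩ := hd
  have h4 : 4 ^ k % 3 = 1 := by simp [Nat.pow_mod]
  rw [pow_succ, pow_mul]
  norm_num
  omega

theorem stmt_17_general (d : ℕ) (hodd : Odd d) :
    matRank (ZMod 2)
      (Matrix.of fun u v : (GaloisField 2 d)ˣ =>
        if Mmat 5 d u v ≠ 0 then (1 : ZMod 2) else 0) =
    matRank (ZMod 2)
      (Matrix.of fun u v : (GaloisField 2 d)ˣ => (Mmat 5 d u v : ZMod 2)) := by
  classical
  have := Fintype.ofFinite (GaloisField 2 d)
  have hF : ¬ IsArtinSchreier (1 : GaloisField 2 d) := by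
    refine not_isArtinSchreier_one ?_
    rw [Fintype.card_eq_nat_card, GaloisField.card 2 d hodd.pos.ne']
    exact not_three_dvd_two_pow_sub_one hodd
  congr 1
  ext u v
  rw [Matrix.of_apply, Matrix.of_apply, Mmat, Nat.add_one_sub_one,
    natCard_units_pow_five_add_pow_four_eq (Units.ne_zero _)]
  obtain h | h := card_quintic_roots_eq_zero_or_odd hF (Units.ne_zero (v * u⁻¹))
  · rw [h, if_neg (not_not.2 rfl), Nat.cast_zero]
  · rw [if_pos h.pos.ne', ZMod.natCast_eq_one_iff_odd.2 h]

/-- For odd `d > 1`, the 0-1 matrix `N₅` obtained from `M₅` by replacing each nonzero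
entry with 1 has the same rank over `F₂` as `M₅` (reduced mod 2). -/
theorem stmt_17 (d : ℕ) (hd : 1 < d) (hodd : Odd d) :
    matRank (ZMod 2)
      (Matrix.of fun u v : (GaloisField 2 d)ˣ =>
        if Mmat 5 d u v ≠ 0 then (1 : ZMod 2) else 0) =
    matRank (ZMod 2)
      (Matrix.of fun u v : (GaloisField 2 d)ˣ => (Mmat 5 d u v : ZMod 2)) :=
  stmt_17_general d hodd
end

section
/- Let d > 1 and let k = 2^m − 1 for an integer m > 1. Let M_k be the square matrix indexed by F_{2^d}^* whose (u,v) entry is the number of x ∈ F_{2^d}^* with v·u⁻¹ = x^k + x^{k−1}, and let N_k be the matrix obtained from M_k by replacing every nonzero entry with 1. Then the rank over F₂ of N_k equals the rank over F₂ of M_k (i.e., of the reduction of M_k modulo 2). -/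
section CharTwo

variable {F : Type*} [Field F] [CharP F 2]

def linearizedHom (c : F) (m : ℕ) : F →+ F where
  toFun y := c * y ^ 2 ^ m + y ^ 2 + y
  map_zero' := by simp
  map_add' a b := by
    simp only [add_pow_char_pow, add_pow_char]
    ring

theorem linearizedHom_inv_eq_zero_iff {c x : F} {m : ℕ} (hm : 0 < m) (hx : x ≠ 0) :
    linearizedHom c m x⁻¹ = 0 ↔ x ^ (2 ^ m - 1) + x ^ (2 ^ m - 1 - 1) = c := by
  obtain ⟨n, hn⟩ : ∃ n, 2 ^ m = n + 2 :=
    ⟨2 ^ m - 2, by have := Nat.pow_le_pow_right two_pos hm; omega⟩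
  have hxx : x * x⁻¹ = 1 := mul_inv_cancel₀ hx
  have hxxn : (x * x⁻¹) ^ n = 1 := by rw [hxx, one_pow]
  have hfactor : linearizedHom c m x⁻¹ = (c + (x ^ (n + 1) + x ^ n)) * x⁻¹ ^ (n + 2) := by
    change c * x⁻¹ ^ 2 ^ m + x⁻¹ ^ 2 + x⁻¹ = _
    rw [hn]
    linear_combination (-(x * x⁻¹ ^ 2) - x⁻¹ ^ 2) * hxxn + (-x⁻¹) * hxx
  rw [hfactor, mul_eq_zero, or_iff_left (pow_ne_zero _ (inv_ne_zero hx)), CharTwo.add_eq_zero,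
    eq_comm, hn]
  rfl

def unitsFiberEquivKerNonzero {c : F} {m : ℕ} (hm : 0 < m) :
    {x : Fˣ // (x : F) ^ (2 ^ m - 1) + (x : F) ^ (2 ^ m - 1 - 1) = c} ≃
      {y : F // y ∈ (linearizedHom c m).ker ∧ y ≠ 0} where
  toFun x := ⟨((x : Fˣ) : F)⁻¹, (linearizedHom_inv_eq_zero_iff hm x.1.ne_zero).2 x.2,
    inv_ne_zero x.1.ne_zero⟩
  invFun y := ⟨Units.mk0 y⁻¹ (inv_ne_zero y.2.2),
    (linearizedHom_inv_eq_zero_iff hm (inv_ne_zero y.2.2)).1 (by rw [inv_inv]; exact y.2.1)⟩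
  left_inv x := Subtype.ext (Units.ext (inv_inv _))
  right_inv y := Subtype.ext (inv_inv _)

theorem exists_card_addSubgroup_eq_two_pow [Finite F] (H : AddSubgroup F) :
    ∃ j, Nat.card H = 2 ^ j := by
  have : Fintype F := Fintype.ofFinite F
  obtain ⟨n, -, hcard⟩ := FiniteField.card F 2
  rw [← Nat.card_eq_fintype_card] at hcard
  obtain ⟨j, -, hj⟩ := (Nat.dvd_prime_pow Nat.prime_two).1 (hcard ▸ H.card_addSubgroup_dvd_card)
  exact ⟨j, hj⟩

theorem exists_card_units_fiber_eq_two_pow_sub_one [Finite F] {m : ℕ} (hm : 0 < m) (c : F) :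
    ∃ j, Nat.card {x : Fˣ // (x : F) ^ (2 ^ m - 1) + (x : F) ^ (2 ^ m - 1 - 1) = c} =
      2 ^ j - 1 := by
  obtain ⟨j, hj⟩ := exists_card_addSubgroup_eq_two_pow (linearizedHom c m).ker
  refine ⟨j, ?_⟩
  rw [Nat.card_congr (unitsFiberEquivKerNonzero hm), ← hj]
  change Nat.card ↥(((linearizedHom c m).ker : Set F) \ {0}) = _
  rw [Nat.card_coe_set_eq, Set.ncard_sdiff_singleton_of_mem (zero_mem _), ← Nat.card_coe_set_eq]
  rfl

end CharTwo

theorem ZMod.natCast_two_pow_sub_one_eq_ite (j : ℕ) :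
    ((2 ^ j - 1 : ℕ) : ZMod 2) = if 2 ^ j - 1 ≠ 0 then 1 else 0 := by
  rcases j with _ | j
  · simp
  · rw [if_pos (by have := Nat.one_lt_two_pow_iff.2 j.succ_ne_zero; omega),
      ZMod.natCast_eq_one_iff_odd]
    exact Nat.Even.sub_odd Nat.one_le_two_pow (by simp [Nat.even_pow]) odd_one

theorem ite_Mmat_ne_zero_eq_natCast {d m : ℕ} (hm : 0 < m) (u v : (GaloisField 2 d)ˣ) :
    (if Mmat (2 ^ m - 1) d u v ≠ 0 then (1 : ZMod 2) else 0) = Mmat (2 ^ m - 1) d u v := by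
  obtain ⟨j, hj⟩ := exists_card_units_fiber_eq_two_pow_sub_one hm
    ((v * u⁻¹ : (GaloisField 2 d)ˣ) : GaloisField 2 d)
  rw [Mmat, hj, ZMod.natCast_two_pow_sub_one_eq_ite]

theorem stmt_18_general (d m k : ℕ) (hm : 1 < m) (hk : k = 2 ^ m - 1) :
    matRank (ZMod 2)
      (Matrix.of fun u v : (GaloisField 2 d)ˣ =>
        if Mmat k d u v ≠ 0 then (1 : ZMod 2) else 0) =
    matRank (ZMod 2)
      (Matrix.of fun u v : (GaloisField 2 d)ˣ => (Mmat k d u v : ZMod 2)) := by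
  subst hk
  congr 1
  ext u v
  exact ite_Mmat_ne_zero_eq_natCast (by omega) u v

/-- For `d > 1` and `k = 2^m - 1` with `m > 1`, the 0-1 matrix `N_k` obtained from `M_k`
by replacing each nonzero entry with 1 has the same rank over `F₂` as `M_k`
(reduced mod 2). -/
theorem stmt_18 (d m k : ℕ) (hd : 1 < d) (hm : 1 < m) (hk : k = 2 ^ m - 1) :
    matRank (ZMod 2)
      (Matrix.of fun u v : (GaloisField 2 d)ˣ =>
        if Mmat k d u v ≠ 0 then (1 : ZMod 2) else 0) =
    matRank (ZMod 2)
      (Matrix.of fun u v : (GaloisField 2 d)ˣ => (Mmat k d u v : ZMod 2)) :=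
  stmt_18_general d m k hm hk
end
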